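/- (Necessary condition for simultaneous bias removal and optimal performance.) Fix discrete random variables Y and A on a common probability space with H(Y|A) = 0, and let (Z_θ)_{θ ∈ Θ} be any nonempty family of discrete random variables on the same probability space. If there exists φ ∈ Θ such that I(Z_φ;A) = infimum over θ ∈ Θ of I(Z_θ;A) = 0 and I(Z_φ;Y) = supremum over θ ∈ Θ of I(Z_θ;Y), then the supremum over θ ∈ Θ of I(Z_θ;Y) equals 0. In particular, unless every element of the family has zero mutual information with Y, no single φ can simultaneously minimize I(Z_θ;A) to 0 and maximize I(Z_θ;Y) when H(Y|A) = 0. -/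

import Mathlib

open MeasureTheory ProbabilityTheory Real

/-- Shannon entropy of a discrete (finite-valued) random variable `X` under measure `μ`:
`H(X) = ∑ₛ -P(X = s) log P(X = s)`. -/
noncomputable def entropy {Ω S : Type*} [MeasurableSpace Ω] [Fintype S]
    (μ : Measure Ω) (X : Ω → S) : ℝ :=
  ∑ s : S, Real.negMulLog ((μ (X ⁻¹' {s})).toReal)

/-- Conditional Shannon entropy `H(Y | A) = H(Y, A) - H(A)`. -/
noncomputable def condEntropy {Ω S T : Type*} [MeasurableSpace Ω] [Fintype S] [Fintype T]
    (μ : Measure Ω) (Y : Ω → S) (A : Ω → T) : ℝ :=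
  entropy μ (fun ω => (Y ω, A ω)) - entropy μ A

/-- Mutual information `I(X ; Y) = H(X) + H(Y) - H(X, Y)`. -/
noncomputable def mutualInfo {Ω S T : Type*} [MeasurableSpace Ω] [Fintype S] [Fintype T]
    (μ : Measure Ω) (X : Ω → S) (Y : Ω → T) : ℝ :=
  entropy μ X + entropy μ Y - entropy μ (fun ω => (X ω, Y ω))

/-- Conditional mutual information `I(X ; Y | A) = H(X | A) - H(X | (Y, A))`. -/
noncomputable def condMutualInfo {Ω S T U : Type*} [MeasurableSpace Ω]
    [Fintype S] [Fintype T] [Fintype U]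
    (μ : Measure Ω) (X : Ω → S) (Y : Ω → T) (A : Ω → U) : ℝ :=
  condEntropy μ X A - condEntropy μ X (fun ω => (Y ω, A ω))

/-!
Because `H(Y | A) = 0`, submodularity of entropy gives
`H(Z, Y, A) + H(Y) ≤ H(Z, Y) + H(Y, A) = H(Z, Y) + H(A)`, and with `H(Z, A) ≤ H(Z, Y, A)` this is
`I(Z; Y) ≤ I(Z; A)` for every `Z`. So the optimal `Z_φ` has `0 ≤ I(Z_φ; Y) ≤ I(Z_φ; A) = 0`.
Submodularity itself is an instance of Gibbs' inequality.
-/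

open Finset

lemma negMulLog_le_mul_neg_log_add_sub {p q : ℝ} (hp : 0 ≤ p) (hq : 0 ≤ q)
    (hpq : 0 < p → 0 < q) : negMulLog p ≤ p * -log q + (q - p) := by
  rcases hp.eq_or_lt with rfl | hp
  · simpa using hq
  have hq := hpq hp
  have key := mul_le_mul_of_nonneg_left (log_le_sub_one_of_pos (div_pos hq hp)) hp.le
  rw [log_div hq.ne' hp.ne', mul_sub_one, mul_div_cancel₀ _ hp.ne'] at key
  rw [negMulLog]
  linarith

/-- Gibbs' inequality. -/
lemma sum_negMulLog_le_sum_mul_neg_log {ι : Type*} (s : Finset ι) {p q : ι → ℝ}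
    (hp : ∀ i ∈ s, 0 ≤ p i) (hq : ∀ i ∈ s, 0 ≤ q i) (hpq : ∀ i ∈ s, 0 < p i → 0 < q i)
    (hsum : ∑ i ∈ s, q i ≤ ∑ i ∈ s, p i) :
    ∑ i ∈ s, negMulLog (p i) ≤ ∑ i ∈ s, p i * -log (q i) := by
  have := sum_le_sum fun i hi => negMulLog_le_mul_neg_log_add_sub (hp i hi) (hq i hi) (hpq i hi)
  rw [sum_add_distrib, sum_sub_distrib] at this
  linarith

lemma negMulLog_sum_le_sum_negMulLog {ι : Type*} (s : Finset ι) {f : ι → ℝ}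
    (hf : ∀ i ∈ s, 0 ≤ f i) :
    negMulLog (∑ i ∈ s, f i) ≤ ∑ i ∈ s, negMulLog (f i) := by
  rw [negMulLog, neg_mul, ← mul_neg, sum_mul]
  refine sum_le_sum fun i hi => ?_
  rcases (hf i hi).eq_or_lt with h0 | h0
  · simp [← h0]
  · rw [negMulLog, neg_mul, ← mul_neg]
    exact mul_le_mul_of_nonneg_left (neg_le_neg (log_le_log h0 (single_le_sum hf hi))) h0.le

noncomputable def probMass {Ω S : Type*} [MeasurableSpace Ω] (μ : Measure Ω) (X : Ω → S)
    (s : S) : ℝ :=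
  (μ (X ⁻¹' {s})).toReal

section Laws

variable {Ω : Type*} [MeasurableSpace Ω] {μ : Measure Ω}

lemma probMass_nonneg {S : Type*} {X : Ω → S} (s : S) : 0 ≤ probMass μ X s :=
  ENNReal.toReal_nonneg

lemma probMass_comp [IsFiniteMeasure μ] {S T : Type*} [Fintype S] [MeasurableSpace S]
    [MeasurableSingletonClass S] [DecidableEq T] {V : Ω → S} (hV : Measurable V) (g : S → T)
    (t : T) : probMass μ (fun ω => g (V ω)) t = ∑ s with g s = t, probMass μ V s := by
  have hpre : (fun ω => g (V ω)) ⁻¹' {t} = V ⁻¹' ↑({s | g s = t} : Finset S) := by ext; simp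
  rw [probMass, hpre, ← sum_measure_preimage_singleton _ fun s _ => hV (measurableSet_singleton s),
    ENNReal.toReal_sum fun s _ => measure_ne_top μ _]
  rfl

lemma probMass_le_probMass_comp [IsFiniteMeasure μ] {S T : Type*} [Fintype S] [MeasurableSpace S]
    [MeasurableSingletonClass S] {V : Ω → S} (hV : Measurable V) (g : S → T) (s : S) :
    probMass μ V s ≤ probMass μ (fun ω => g (V ω)) (g s) := by
  classical
  rw [probMass_comp hV]
  exact single_le_sum (f := probMass μ V) (fun _ _ => probMass_nonneg _)
    (mem_filter.2 ⟨mem_univ s, rfl⟩)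

lemma sum_probMass [IsProbabilityMeasure μ] {S : Type*} [Fintype S] [MeasurableSpace S]
    [MeasurableSingletonClass S] {V : Ω → S} (hV : Measurable V) : ∑ s, probMass μ V s = 1 := by
  classical
  simpa [probMass] using (probMass_comp (μ := μ) hV (fun _ => ()) ()).symm

lemma probMass_fst_eq_sum [IsFiniteMeasure μ] {S T : Type*} [Fintype S] [MeasurableSpace S]
    [MeasurableSingletonClass S] [Fintype T] [MeasurableSpace T] [MeasurableSingletonClass T]
    {X : Ω → S} {Y : Ω → T} (hX : Measurable X) (hY : Measurable Y) (x : S) :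
    probMass μ X x = ∑ y, probMass μ (fun ω => (X ω, Y ω)) (x, y) := by
  classical
  refine (probMass_comp (hX.prodMk hY) Prod.fst x).trans ?_
  rw [sum_filter, Fintype.sum_prod_type_right]
  simp

lemma probMass_snd_eq_sum [IsFiniteMeasure μ] {S T : Type*} [Fintype S] [MeasurableSpace S]
    [MeasurableSingletonClass S] [Fintype T] [MeasurableSpace T] [MeasurableSingletonClass T]
    {X : Ω → S} {Y : Ω → T} (hX : Measurable X) (hY : Measurable Y) (y : T) :
    probMass μ Y y = ∑ x, probMass μ (fun ω => (X ω, Y ω)) (x, y) := by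
  classical
  refine (probMass_comp (hX.prodMk hY) Prod.snd y).trans ?_
  rw [sum_filter, Fintype.sum_prod_type]
  simp

lemma entropy_comp_le [IsFiniteMeasure μ] {S T : Type*} [Fintype S] [MeasurableSpace S]
    [MeasurableSingletonClass S] [Fintype T] {V : Ω → S} (hV : Measurable V) (g : S → T) :
    entropy μ (fun ω => g (V ω)) ≤ entropy μ V := by
  classical
  calc entropy μ (fun ω => g (V ω))
      = ∑ t, negMulLog (∑ s with g s = t, probMass μ V s) :=
        sum_congr rfl fun t _ => congrArg negMulLog (probMass_comp hV g t)
    _ ≤ ∑ t, ∑ s with g s = t, negMulLog (probMass μ V s) :=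
        sum_le_sum fun t _ => negMulLog_sum_le_sum_negMulLog _ fun _ _ => probMass_nonneg _
    _ = entropy μ V := sum_fiberwise _ _ _

lemma sum_mul_neg_log_probMass_comp [IsFiniteMeasure μ] {S T : Type*} [Fintype S]
    [MeasurableSpace S] [MeasurableSingletonClass S] [Fintype T] {V : Ω → S} (hV : Measurable V)
    (g : S → T) :
    ∑ s, probMass μ V s * -log (probMass μ (fun ω => g (V ω)) (g s)) =
      entropy μ (fun ω => g (V ω)) := by
  classical
  rw [← sum_fiberwise univ g]
  refine sum_congr rfl fun t _ => ?_
  rw [sum_congr rfl fun s hs => by rw [(mem_filter.1 hs).2], ← sum_mul, ← probMass_comp hV g t]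
  exact (neg_mul_comm _ _).symm

end Laws

section Inequalities

variable {Ω S T U : Type*} [MeasurableSpace Ω] {μ : Measure Ω} [IsProbabilityMeasure μ]
  [Fintype S] [MeasurableSpace S] [MeasurableSingletonClass S]
  [Fintype T] [MeasurableSpace T] [MeasurableSingletonClass T]
  [Fintype U] [MeasurableSpace U] [MeasurableSingletonClass U]
  {X : Ω → S} {Y : Ω → T} {Z : Ω → U}

lemma entropy_triple_add_entropy_le (hX : Measurable X) (hY : Measurable Y) (hZ : Measurable Z) :
    entropy μ (fun ω => (X ω, Y ω, Z ω)) + entropy μ Y ≤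
      entropy μ (fun ω => (X ω, Y ω)) + entropy μ (fun ω => (Y ω, Z ω)) := by
  have hV : Measurable fun ω => (X ω, Y ω, Z ω) := hX.prodMk (hY.prodMk hZ)
  let p := probMass μ fun ω => (X ω, Y ω, Z ω)
  let pXY := probMass μ fun ω => (X ω, Y ω)
  let pYZ := probMass μ fun ω => (Y ω, Z ω)
  let pY := probMass μ Y
  -- the law under which `X` and `Z` are conditionally independent given `Y`
  let q : S × T × U → ℝ := fun s => pXY (s.1, s.2.1) * pYZ s.2 / pY s.2.1
  have marginals_pos : ∀ s, 0 < p s → 0 < pXY (s.1, s.2.1) ∧ 0 < pYZ s.2 ∧ 0 < pY s.2.1 :=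
    fun s hs => ⟨hs.trans_le (probMass_le_probMass_comp hV (fun s => (s.1, s.2.1)) s),
      hs.trans_le (probMass_le_probMass_comp hV Prod.snd s),
      hs.trans_le (probMass_le_probMass_comp hV (fun s => s.2.1) s)⟩
  have hXY_Y : ∀ y, ∑ x, pXY (x, y) = pY y := fun y => (probMass_snd_eq_sum hX hY y).symm
  have hYZ_Y : ∀ y, ∑ z, pYZ (y, z) = pY y := fun y => (probMass_fst_eq_sum hY hZ y).symm
  have q_sum : ∑ s, q s = 1 := by
    calc ∑ s, q s = ∑ y, (∑ x, pXY (x, y)) * (∑ z, pYZ (y, z)) / pY y := by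
          simp only [q, Fintype.sum_prod_type]
          rw [sum_comm]
          refine sum_congr rfl fun y _ => ?_
          simp only [sum_mul_sum, sum_div]
      _ = ∑ y, pY y := by
          simp only [hXY_Y, hYZ_Y, mul_self_div_self]
      _ = 1 := sum_probMass hY
  have gibbs := sum_negMulLog_le_sum_mul_neg_log univ (p := p) (q := q)
    (fun s _ => probMass_nonneg s)
    (fun s _ => div_nonneg (mul_nonneg (probMass_nonneg _) (probMass_nonneg _)) (probMass_nonneg _))
    (fun s _ hs => by obtain ⟨h₁, h₂, h₃⟩ := marginals_pos s hs; positivity)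
    (by rw [q_sum, sum_probMass hV])
  have cross_entropy : ∀ s, p s * -log (q s) =
      p s * -log (pXY (s.1, s.2.1)) + p s * -log (pYZ s.2) - p s * -log (pY s.2.1) := by
    intro s
    rcases (probMass_nonneg s : 0 ≤ p s).eq_or_lt with hs | hs
    · rw [show p s = 0 from hs.symm]
      simp
    obtain ⟨h₁, h₂, h₃⟩ := marginals_pos s hs
    rw [log_div (by positivity) h₃.ne', log_mul h₁.ne' h₂.ne']
    ring
  have hXY : ∑ s, p s * -log (pXY (s.1, s.2.1)) = entropy μ fun ω => (X ω, Y ω) :=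
    sum_mul_neg_log_probMass_comp hV (fun s => (s.1, s.2.1))
  have hYZ : ∑ s, p s * -log (pYZ s.2) = entropy μ fun ω => (Y ω, Z ω) :=
    sum_mul_neg_log_probMass_comp hV Prod.snd
  have hY : ∑ s, p s * -log (pY s.2.1) = entropy μ Y :=
    sum_mul_neg_log_probMass_comp hV (fun s => s.2.1)
  rw [sum_congr rfl fun s _ => cross_entropy s, sum_sub_distrib, sum_add_distrib, hXY, hYZ,
    hY] at gibbs
  exact le_sub_iff_add_le.mp gibbs

lemma entropy_pair_le_add (hX : Measurable X) (hY : Measurable Y) :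
    entropy μ (fun ω => (X ω, Y ω)) ≤ entropy μ X + entropy μ Y := by
  have hunit : Measurable fun _ : Ω => () := measurable_const
  -- submodularity with a constant middle variable
  have hsub := entropy_triple_add_entropy_le (μ := μ) hX hunit hY
  have hconst : entropy μ (fun _ : Ω => ()) = 0 := by simp [entropy]
  have hXY := entropy_comp_le (μ := μ) (hX.prodMk (hunit.prodMk hY)) fun s => (s.1, s.2.2)
  have hX' := entropy_comp_le (μ := μ) hX fun x => (x, ())
  have hY' := entropy_comp_le (μ := μ) hY fun y => ((), y)
  linarith

lemma mutualInfo_nonneg (hX : Measurable X) (hY : Measurable Y) : 0 ≤ mutualInfo μ X Y := by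
  have := entropy_pair_le_add (μ := μ) hX hY
  rw [mutualInfo]
  linarith

lemma mutualInfo_le_of_condEntropy_eq_zero (hX : Measurable X) (hY : Measurable Y)
    (hZ : Measurable Z) (hYZ : condEntropy μ Y Z = 0) :
    mutualInfo μ X Y ≤ mutualInfo μ X Z := by
  have hsub := entropy_triple_add_entropy_le (μ := μ) hX hY hZ
  have hmono := entropy_comp_le (μ := μ) (hX.prodMk (hY.prodMk hZ)) fun s => (s.1, s.2.2)
  rw [condEntropy] at hYZ
  rw [mutualInfo, mutualInfo]
  linarith

end Inequalities

theorem necessary_condition_general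
    {Ω 𝒵 𝒴 𝒜 : Type*} [MeasurableSpace Ω]
    [Fintype 𝒵] [MeasurableSpace 𝒵] [MeasurableSingletonClass 𝒵]
    [Fintype 𝒴] [MeasurableSpace 𝒴] [MeasurableSingletonClass 𝒴]
    [Fintype 𝒜] [MeasurableSpace 𝒜] [MeasurableSingletonClass 𝒜]
    (μ : Measure Ω) [IsProbabilityMeasure μ]
    (Y : Ω → 𝒴) (A : Ω → 𝒜) (hY : Measurable Y) (hA : Measurable A)
    {Θ : Type*} (Z : Θ → Ω → 𝒵) (hZ : ∀ θ, Measurable (Z θ))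
    (hYA : condEntropy μ Y A = 0)
    (hexists : ∃ φ : Θ,
      mutualInfo μ (Z φ) A = (⨅ θ : Θ, mutualInfo μ (Z θ) A) ∧
      (⨅ θ : Θ, mutualInfo μ (Z θ) A) = 0 ∧
      mutualInfo μ (Z φ) Y = (⨆ θ : Θ, mutualInfo μ (Z θ) Y)) :
    (⨆ θ : Θ, mutualInfo μ (Z θ) Y) = 0 := by
  obtain ⟨φ, hmin, hmin_zero, hmax⟩ := hexists
  rw [← hmax]
  refine le_antisymm ?_ (mutualInfo_nonneg (hZ φ) hY)
  calc mutualInfo μ (Z φ) Y ≤ mutualInfo μ (Z φ) A :=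
        mutualInfo_le_of_condEntropy_eq_zero (hZ φ) hY hA hYA
    _ = 0 := hmin.trans hmin_zero

theorem necessary_condition
    {Ω 𝒵 𝒴 𝒜 : Type*} [MeasurableSpace Ω]
    [Fintype 𝒵] [MeasurableSpace 𝒵] [MeasurableSingletonClass 𝒵]
    [Fintype 𝒴] [MeasurableSpace 𝒴] [MeasurableSingletonClass 𝒴]
    [Fintype 𝒜] [MeasurableSpace 𝒜] [MeasurableSingletonClass 𝒜]
    (μ : Measure Ω) [IsProbabilityMeasure μ]
    (Y : Ω → 𝒴) (A : Ω → 𝒜) (hY : Measurable Y) (hA : Measurable A)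
    {Θ : Type*} [Nonempty Θ] (Z : Θ → Ω → 𝒵) (hZ : ∀ θ, Measurable (Z θ))
    (hYA : condEntropy μ Y A = 0)
    (hexists : ∃ φ : Θ,
      mutualInfo μ (Z φ) A = (⨅ θ : Θ, mutualInfo μ (Z θ) A) ∧
      (⨅ θ : Θ, mutualInfo μ (Z θ) A) = 0 ∧
      mutualInfo μ (Z φ) Y = (⨆ θ : Θ, mutualInfo μ (Z θ) Y)) :
    (⨆ θ : Θ, mutualInfo μ (Z θ) Y) = 0 :=
  necessary_condition_general μ Y A hY hA Z hZ hYA hexists
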